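/- arXiv:2005.08062 — 2 statements merged into one kernel-verified Lean document; each statement's English description precedes it below -/
import Mathlib

section
/- Let n ≥ 2, b_{ij} = b_{ji} for all i, j, and let ρ_1, ..., ρ_n > 0 with ∑_{i=1}^n ρ_i w_i = 0 for reals w_1, ..., w_n. Define W_i = ρ_i w_i, W̃ = (W_1, ..., W_{n-1}), Q_{ij} = δ_{ij}/ρ_j + 1/ρ_n and B_{ij} = δ_{ij} ∑_{m=1}^n b_{im} ρ_i ρ_m − b_{ij} ρ_i ρ_j (indices of Q, B restricted to 1 ≤ i,j ≤ n-1 as appropriate). Then (1/2) ∑_{i,j=1}^n b_{ij} ρ_i ρ_j (w_i − w_j)² = W̃ᵀ Qᵀ B Q W̃. -/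
open Finset Matrix

/-- Reformulation of the frictional dissipation quadratic form:
    (1/2) ∑_{i,j} b_{ij} ρ_i ρ_j (w_i − w_j)² = W̃ᵀ Qᵀ B Q W̃. -/
theorem stmt_2 (m : ℕ) (hm : 1 ≤ m) (b : Fin (m + 1) → Fin (m + 1) → ℝ)
    (hbsym : ∀ i j, b i j = b j i)
    (ρ w : Fin (m + 1) → ℝ) (hρ : ∀ i, 0 < ρ i)
    (hconstr : ∑ i, ρ i * w i = 0)
    (W : Fin m → ℝ) (hW : ∀ i, W i = ρ i.castSucc * w i.castSucc)
    (Q B : Matrix (Fin m) (Fin m) ℝ)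
    (hQ : ∀ i j, Q i j = (if i = j then 1 / ρ j.castSucc else 0) + 1 / ρ (Fin.last m))
    (hB : ∀ i j, B i j =
        (if i = j then ∑ k, b i.castSucc k * ρ i.castSucc * ρ k else 0)
        - b i.castSucc j.castSucc * ρ i.castSucc * ρ j.castSucc) :
    (1 / 2) * ∑ i, ∑ j, b i j * ρ i * ρ j * (w i - w j) ^ 2
      = W ⬝ᵥ (Qᵀ * B * Q).mulVec W := by
  set v : Fin (m + 1) → ℝ := fun i => w i - w (Fin.last m) with hv
  have hvlast : v (Fin.last m) = 0 := by simp [hv]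
  have hρne : ∀ i : Fin (m + 1), ρ i ≠ 0 := fun i => (hρ i).ne'
  -- sum of W
  have hsumW : ∑ i : Fin m, W i = -(ρ (Fin.last m) * w (Fin.last m)) := by
    have h1 := hconstr
    rw [Fin.sum_univ_castSucc] at h1
    have h2 : ∑ i : Fin m, ρ i.castSucc * w i.castSucc
        = -(ρ (Fin.last m) * w (Fin.last m)) := by linarith
    calc ∑ i : Fin m, W i = ∑ i : Fin m, ρ i.castSucc * w i.castSucc :=
          Finset.sum_congr rfl (fun i _ => hW i)
      _ = _ := h2
  have hQW : ∀ i : Fin m, Q.mulVec W i = v i.castSucc := by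
    intro i
    simp only [Matrix.mulVec, dotProduct]
    have hterm : ∀ j : Fin m, Q i j * W j
        = (if i = j then (1 / ρ j.castSucc) * W j else 0)
          + (1 / ρ (Fin.last m)) * W j := by
      intro j; rw [hQ]; split <;> ring
    rw [Finset.sum_congr rfl (fun j _ => hterm j), Finset.sum_add_distrib,
      Finset.sum_ite_eq, if_pos (Finset.mem_univ i), ← Finset.mul_sum, hsumW, hW]
    have e1 : (1 / ρ i.castSucc) * (ρ i.castSucc * w i.castSucc) = w i.castSucc := by
      rw [one_div, inv_mul_cancel_left₀ (hρne _)]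
    have e2 : (1 / ρ (Fin.last m)) * -(ρ (Fin.last m) * w (Fin.last m))
        = -(w (Fin.last m)) := by
      rw [mul_neg, one_div, inv_mul_cancel_left₀ (hρne _)]
    rw [e1, e2, hv]
    ring
  -- RHS reduction
  have hRHS : W ⬝ᵥ (Qᵀ * B * Q).mulVec W
      = (Q.mulVec W) ⬝ᵥ B.mulVec (Q.mulVec W) := by
    rw [← Matrix.mulVec_mulVec, ← Matrix.mulVec_mulVec, Matrix.dotProduct_mulVec,
      Matrix.vecMul_transpose]
  rw [hRHS]
  have hRHS2 : (Q.mulVec W) ⬝ᵥ B.mulVec (Q.mulVec W)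
      = ∑ i : Fin m, v i.castSucc * ∑ j : Fin m, B i j * v j.castSucc := by
    have hQWfun : Q.mulVec W = fun i => v i.castSucc := funext hQW
    rw [hQWfun]
    simp only [dotProduct, Matrix.mulVec]
  rw [hRHS2]
  -- expand B in the RHS
  have hRHS3 : ∀ i : Fin m, ∑ j : Fin m, B i j * v j.castSucc
      = (∑ k, b i.castSucc k * ρ i.castSucc * ρ k) * v i.castSucc
        - ∑ j : Fin m, b i.castSucc j.castSucc * ρ i.castSucc * ρ j.castSucc * v j.castSucc := by
    intro i
    have hterm : ∀ j : Fin m, B i j * v j.castSucc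
        = (if i = j then (∑ k, b i.castSucc k * ρ i.castSucc * ρ k) * v j.castSucc else 0)
          - b i.castSucc j.castSucc * ρ i.castSucc * ρ j.castSucc * v j.castSucc := by
      intro j; rw [hB]; split <;> ring
    rw [Finset.sum_congr rfl (fun j _ => hterm j), Finset.sum_sub_distrib,
      Finset.sum_ite_eq, if_pos (Finset.mem_univ i)]
  -- LHS reduction
  have hwv : ∀ i j : Fin (m + 1), w i - w j = v i - v j := by
    intro i j; simp [hv]
  have key : ∑ i, ∑ j, b i j * ρ i * ρ j * (w i - w j) ^ 2
      = (∑ i, ∑ j, b i j * ρ i * ρ j * v i ^ 2)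
        + (∑ i, ∑ j, b i j * ρ i * ρ j * v j ^ 2)
        - 2 * ∑ i, ∑ j, b i j * ρ i * ρ j * (v i * v j) := by
    have h1 : ∀ i j : Fin (m + 1), b i j * ρ i * ρ j * (w i - w j) ^ 2
        = b i j * ρ i * ρ j * v i ^ 2 + b i j * ρ i * ρ j * v j ^ 2
          - 2 * (b i j * ρ i * ρ j * (v i * v j)) := by
      intro i j; rw [hwv]; ring
    simp only [h1, Finset.sum_sub_distrib, Finset.sum_add_distrib, ← Finset.mul_sum]
  have hA' : ∑ i, ∑ j, b i j * ρ i * ρ j * v j ^ 2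
      = ∑ i, ∑ j, b i j * ρ i * ρ j * v i ^ 2 := by
    rw [Finset.sum_comm]
    apply Finset.sum_congr rfl; intro i _
    apply Finset.sum_congr rfl; intro j _
    rw [hbsym]; ring
  have hA : ∑ i, ∑ j, b i j * ρ i * ρ j * v i ^ 2
      = ∑ i : Fin m, (∑ j, b i.castSucc j * ρ i.castSucc * ρ j) * v i.castSucc ^ 2 := by
    have h1 : ∀ i : Fin (m + 1), ∑ j, b i j * ρ i * ρ j * v i ^ 2
        = (∑ j, b i j * ρ i * ρ j) * v i ^ 2 := by
      intro i; rw [Finset.sum_mul]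
    rw [Finset.sum_congr rfl (fun i _ => h1 i), Fin.sum_univ_castSucc, hvlast]
    simp
  have hC : ∑ i, ∑ j, b i j * ρ i * ρ j * (v i * v j)
      = ∑ i : Fin m, v i.castSucc *
          ∑ j : Fin m, b i.castSucc j.castSucc * ρ i.castSucc * ρ j.castSucc * v j.castSucc := by
    have h1 : ∀ i : Fin (m + 1), ∑ j, b i j * ρ i * ρ j * (v i * v j)
        = v i * ∑ j : Fin m, b i j.castSucc * ρ i * ρ j.castSucc * v j.castSucc := by
      intro i
      rw [Finset.mul_sum, Fin.sum_univ_castSucc (f := fun j => b i j * ρ i * ρ j * (v i * v j)),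
        hvlast]
      simp only [mul_zero, zero_mul, add_zero]
      apply Finset.sum_congr rfl; intro j _; ring
    rw [Finset.sum_congr rfl (fun i _ => h1 i),
      Fin.sum_univ_castSucc (f := fun i => v i *
        ∑ j : Fin m, b i j.castSucc * ρ i * ρ j.castSucc * v j.castSucc), hvlast]
    simp
  rw [key, hA', hA, hC]
  have hfinal : ∑ i : Fin m, v i.castSucc * ∑ j : Fin m, B i j * v j.castSucc
      = (∑ i : Fin m, (∑ j, b i.castSucc j * ρ i.castSucc * ρ j) * v i.castSucc ^ 2)
        - ∑ i : Fin m, v i.castSucc *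
            ∑ j : Fin m, b i.castSucc j.castSucc * ρ i.castSucc * ρ j.castSucc * v j.castSucc := by
    rw [← Finset.sum_sub_distrib]
    apply Finset.sum_congr rfl; intro i _
    rw [hRHS3 i]; ring
  rw [hfinal]; ring
end

section
/- Let Φ be a symmetric positive definite (n-1)×(n-1) real matrix whose entries are periodic edge-centered grid functions on a 1D grid of N points, with minimum eigenvalue λ_min > 0 over all grid points. For g in the space of mean-zero periodic cell-centered vector functions, let f solve −d_h(Φ D_h f) = g, and define ‖g‖²_{L_Φ^{-1}} = [D_h f, Φ D_h f]. If ‖g‖_{L^∞} ≤ M, then ‖f‖_{L^∞} ≤ (C M / λ_min) h^{-1/2} (n-1)^{1/2}, where C depends only on the domain length L (via discrete Poincaré and inverse inequalities). -/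
open Finset fwdDiff

/-!
Testing the scheme against `f` and summing by parts gives the energy identity
`λ ‖Δf‖² ≤ [Δf, Φ Δf] = h² ⟨f, g⟩`, with `Δ` the unscaled forward difference. A mean-zero periodic
grid function is bounded by its total variation, hence by `√N ‖Δu‖₂`; so
`⟨f, g⟩ ≤ M N^{3/2} √m ‖Δf‖₂`, whence `‖Δf‖₂ ≤ h² M N^{3/2} √m / λ` and
`‖f‖_∞ ≤ h² N² M √m / λ = L² M √m / λ`. As `h ≤ L`, this is at most `L^{5/2} M √m / (λ √h)`.
-/

theorem sum_abs_le_sqrt_card_mul_sqrt_sum_sq {α : Type*} [Fintype α] (v : α → ℝ) :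
    ∑ x, |v x| ≤ √(Fintype.card α) * √(∑ x, v x ^ 2) := by
  simpa using Real.sum_mul_le_sqrt_mul_sqrt univ (fun _ => 1) (fun x => |v x|)

theorem le_div_of_mul_sq_le_mul {x lam K : ℝ} (hlam : 0 < lam) (hx : 0 ≤ x) (hK : 0 ≤ K)
    (h : lam * x ^ 2 ≤ K * x) : x ≤ K / lam := by
  rw [le_div_iff₀ hlam]
  rcases hx.eq_or_lt with rfl | hx
  · simpa using hK
  · nlinarith

section SummationByParts

variable {G ι : Type*} [AddCommGroup G] [Fintype G] [Fintype ι]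

theorem sum_mul_sub_comp_sub_eq_neg_sum_fwdDiff_mul (c : G) (u v : G → ℝ) :
    ∑ k, u k * (v k - v (k - c)) = -∑ k, Δ_[c] u k * v k := by
  have hshift : ∑ k, u k * v (k - c) = ∑ k, u (k + c) * v k :=
    Fintype.sum_equiv (Equiv.subRight c) _ _ fun k => by simp
  simp only [fwdDiff, mul_sub, sub_mul, sum_sub_distrib, hshift]
  ring

/-- `h · Φ D_h f` on the edge from `k` to `k + c`; the `1 / h` of `D_h` is cleared. -/
def flux (c : G) (Φ : ι → ι → G → ℝ) (f : ι → G → ℝ) (i : ι) (k : G) : ℝ :=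
  ∑ j, Φ i j k * Δ_[c] (f j) k

theorem sum_sum_fwdDiff_mul_flux_eq {c : G} {s : ℝ} {Φ : ι → ι → G → ℝ} {f g : ι → G → ℝ}
    (heq : ∀ i k, flux c Φ f i k - flux c Φ f i (k - c) = -(s * g i k)) :
    ∑ i, ∑ k, Δ_[c] (f i) k * flux c Φ f i k = s * ∑ i, ∑ k, f i k * g i k := by
  calc ∑ i, ∑ k, Δ_[c] (f i) k * flux c Φ f i k
      = -∑ i, ∑ k, f i k * (flux c Φ f i k - flux c Φ f i (k - c)) := by
        simp only [sum_mul_sub_comp_sub_eq_neg_sum_fwdDiff_mul, sum_neg_distrib, neg_neg]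
    _ = s * ∑ i, ∑ k, f i k * g i k := by
        simp only [heq, mul_sum, mul_neg, sum_neg_distrib, neg_neg]
        exact sum_congr rfl fun i _ => sum_congr rfl fun k _ => by ring

end SummationByParts

theorem flux_sub_flux_eq_of_div_eq {G ι : Type*} [AddCommGroupWithOne G] [Fintype ι] {h : ℝ}
    (hh : h ≠ 0) {Φ : ι → ι → G → ℝ} {f g : ι → G → ℝ}
    (heq : ∀ i ℓ,
      -(∑ j, (Φ i j ℓ * ((f j (ℓ + 1) - f j ℓ) / h)
          - Φ i j (ℓ - 1) * ((f j ℓ - f j (ℓ - 1)) / h))) / h = g i ℓ) (i : ι) (ℓ : G) :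
    flux 1 Φ f i ℓ - flux 1 Φ f i (ℓ - 1) = -(h ^ 2 * g i ℓ) := by
  simp only [← heq i ℓ, flux, fwdDiff, sub_add_cancel, ← sum_sub_distrib, ← mul_div_assoc,
    ← sub_div, ← sum_div]
  field_simp

section Periodic

variable {N : ℕ} [NeZero N]

theorem sum_range_comp_add_natCast {M : Type*} [AddCommMonoid M] (F : ZMod N → M) (a : ZMod N) :
    ∑ t ∈ range N, F (a + t) = ∑ k, F k := by
  refine sum_nbij' (fun t => a + t) (fun k => (k - a).val) (by simp)
    (fun k _ => mem_range.mpr (ZMod.val_lt _)) (fun t ht => ?_) (fun k _ => by simp)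
    (fun _ _ => rfl)
  simpa using ZMod.val_cast_of_lt (mem_range.mp ht)

theorem abs_sub_le_sum_abs_fwdDiff (u : ZMod N → ℝ) (a b : ZMod N) :
    |u b - u a| ≤ ∑ k, |Δ_[1] u k| := by
  have htel : u b - u a = ∑ t ∈ range (b - a).val, Δ_[1] u (a + t) := by
    have := sum_range_sub (fun t : ℕ => u (a + t)) (b - a).val
    simp only [ZMod.natCast_val, ZMod.cast_id', id, add_sub_cancel, Nat.cast_zero, add_zero,
      Nat.cast_succ, ← add_assoc] at this
    simp only [fwdDiff, this]
  calc |u b - u a| ≤ ∑ t ∈ range (b - a).val, |Δ_[1] u (a + t)| := htel ▸ abs_sum_le_sum_abs _ _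
    _ ≤ ∑ t ∈ range N, |Δ_[1] u (a + t)| :=
        sum_le_sum_of_subset_of_nonneg (range_subset_range.mpr (ZMod.val_lt _).le)
          fun _ _ _ => abs_nonneg _
    _ = ∑ k, |Δ_[1] u k| := sum_range_comp_add_natCast (fun k => |Δ_[1] u k|) a

theorem abs_le_sum_abs_fwdDiff_of_sum_eq_zero {u : ZMod N → ℝ} (hu : ∑ k, u k = 0)
    (ℓ : ZMod N) : |u ℓ| ≤ ∑ k, |Δ_[1] u k| := by
  obtain ⟨a, -, ha⟩ := exists_le_of_sum_le (f := u) (g := 0) univ_nonempty (by simp [hu])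
  obtain ⟨b, -, hb⟩ := exists_le_of_sum_le (f := 0) (g := u) univ_nonempty (by simp [hu])
  have hab := abs_sub_le_sum_abs_fwdDiff u a ℓ
  have hbl := abs_sub_le_sum_abs_fwdDiff u ℓ b
  rw [abs_le] at hab hbl ⊢
  simp only [Pi.zero_apply] at ha hb
  constructor <;> linarith

theorem abs_le_sqrt_mul_sqrt_sum_fwdDiff_sq {u : ZMod N → ℝ} (hu : ∑ k, u k = 0)
    (ℓ : ZMod N) : |u ℓ| ≤ √N * √(∑ k, Δ_[1] u k ^ 2) := by
  simpa using (abs_le_sum_abs_fwdDiff_of_sum_eq_zero hu ℓ).trans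
    (sum_abs_le_sqrt_card_mul_sqrt_sum_sq (Δ_[1] u))

end Periodic

theorem abs_le_of_coercive_le_sum_mul {ι : Type*} [Fintype ι] {N : ℕ} [NeZero N]
    {f g : ι → ZMod N → ℝ} {lam M s : ℝ} (hlam : 0 < lam) (hs : 0 ≤ s)
    (hf : ∀ i, ∑ k, f i k = 0) (hg : ∀ i k, |g i k| ≤ M)
    (henergy : lam * ∑ i, ∑ k, Δ_[1] (f i) k ^ 2 ≤ s * ∑ i, ∑ k, f i k * g i k) (i : ι)
    (ℓ : ZMod N) : |f i ℓ| ≤ s * N ^ 2 * M * √(Fintype.card ι) / lam := by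
  set e : ι → ℝ := fun i => √(∑ k, Δ_[1] (f i) k ^ 2)
  set E := √(∑ i, ∑ k, Δ_[1] (f i) k ^ 2)
  have hM : 0 ≤ M := (abs_nonneg _).trans (hg i ℓ)
  have hpoincare (i k) : |f i k| ≤ √N * e i := abs_le_sqrt_mul_sqrt_sum_fwdDiff_sq (hf i) k
  have he_le (i) : e i ≤ E :=
    Real.sqrt_le_sqrt <|
      single_le_sum (f := fun j => ∑ k, Δ_[1] (f j) k ^ 2) (fun j _ => by positivity) (mem_univ i)
  have hsum_e : ∑ i, e i ≤ √(Fintype.card ι) * E := by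
    simpa [e, E, abs_of_nonneg, Real.sq_sqrt, sum_nonneg, sq_nonneg] using
      sum_abs_le_sqrt_card_mul_sqrt_sum_sq e
  have hsource : ∑ i, ∑ k, f i k * g i k ≤ N * √N * M * √(Fintype.card ι) * E :=
    calc ∑ i, ∑ k, f i k * g i k ≤ ∑ i, ∑ _k : ZMod N, √N * e i * M :=
          sum_le_sum fun i _ => sum_le_sum fun k _ =>
            (le_abs_self _).trans (by rw [abs_mul]; gcongr; exact hpoincare i k; exact hg i k)
      _ = N * √N * M * ∑ i, e i := by
          simp only [sum_const, card_univ, ZMod.card, nsmul_eq_mul, mul_sum]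
          exact sum_congr rfl fun _ _ => by ring
      _ ≤ N * √N * M * (√(Fintype.card ι) * E) := by gcongr
      _ = N * √N * M * √(Fintype.card ι) * E := by ring
  have hE : E ≤ s * (N * √N * M * √(Fintype.card ι)) / lam := by
    refine le_div_of_mul_sq_le_mul hlam (Real.sqrt_nonneg _) (by positivity) ?_
    rw [Real.sq_sqrt (by positivity)]
    calc _ ≤ _ := henergy
      _ ≤ s * (N * √N * M * √(Fintype.card ι) * E) := by gcongr
      _ = _ := by ring
  calc |f i ℓ| ≤ √N * E := (hpoincare i ℓ).trans (by gcongr; exact he_le i)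
    _ ≤ √N * (s * (N * √N * M * √(Fintype.card ι)) / lam) := by gcongr
    _ = s * N ^ 2 * M * √(Fintype.card ι) / lam := by
        rw [mul_div_assoc']
        congr 1
        linear_combination s * N * M * √(Fintype.card ι) * Real.mul_self_sqrt (Nat.cast_nonneg N)

/-- Discrete elliptic L^∞ estimate: if −d_h(Φ D_h f) = g with g mean-zero and
    ‖g‖_∞ ≤ M, Φ symmetric positive definite with minimum eigenvalue λmin, then
    ‖f‖_∞ ≤ (C M / λmin) h^{-1/2} (n−1)^{1/2}, with C depending only on L. -/
theorem stmt_12 (L : ℝ) (hL : 0 < L) :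
    ∃ C : ℝ, 0 < C ∧
      ∀ (N : ℕ) [NeZero N] (m : ℕ)
        (Φ : Fin m → Fin m → ZMod N → ℝ) (lammin M : ℝ),
        0 < lammin →
        (∀ i j ℓ, Φ i j ℓ = Φ j i ℓ) →
        (∀ (ℓ : ZMod N) (z : Fin m → ℝ),
            lammin * ∑ i, (z i) ^ 2 ≤ ∑ i, ∑ j, z i * Φ i j ℓ * z j) →
        ∀ f g : Fin m → ZMod N → ℝ,
        (∀ i, ∑ ℓ, f i ℓ = 0) →
        (∀ i, ∑ ℓ, g i ℓ = 0) →
        (∀ i ℓ, |g i ℓ| ≤ M) →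
        (∀ i ℓ,
          -(∑ j, (Φ i j ℓ * ((f j (ℓ + 1) - f j ℓ) / (L / N))
              - Φ i j (ℓ - 1) * ((f j ℓ - f j (ℓ - 1)) / (L / N)))) / (L / N)
            = g i ℓ) →
        ∀ i ℓ, |f i ℓ| ≤ C * M / lammin * (L / N) ^ (-(1 / 2 : ℝ)) * (m : ℝ) ^ ((1 / 2 : ℝ)) := by
  refine ⟨L ^ 2 * √L, by positivity, ?_⟩
  intro N _ m Φ lam M hlam _ hcoercive f g hf _ hg heq i ℓ
  have hN : (0 : ℝ) < N := Nat.cast_pos.mpr (NeZero.pos N)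
  have hh : 0 < L / N := div_pos hL hN
  have henergy : lam * ∑ i, ∑ k, Δ_[1] (f i) k ^ 2 ≤ (L / N) ^ 2 * ∑ i, ∑ k, f i k * g i k :=
    calc lam * ∑ i, ∑ k, Δ_[1] (f i) k ^ 2 = ∑ k, lam * ∑ i, Δ_[1] (f i) k ^ 2 := by
          rw [sum_comm, mul_sum]
      _ ≤ ∑ k, ∑ i, ∑ j, Δ_[1] (f i) k * Φ i j k * Δ_[1] (f j) k :=
          sum_le_sum fun k _ => hcoercive k _
      _ = ∑ i, ∑ k, Δ_[1] (f i) k * flux 1 Φ f i k := by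
          rw [sum_comm]
          simp only [flux, mul_sum, mul_assoc]
      _ = _ := sum_sum_fwdDiff_mul_flux_eq (flux_sub_flux_eq_of_div_eq hh.ne' heq)
  have hbound : |f i ℓ| ≤ L ^ 2 * M * √m / lam := by
    simpa [div_pow, hN.ne'] using
      abs_le_of_coercive_le_sum_mul hlam (by positivity) hf hg henergy i ℓ
  have hM : 0 ≤ M := (abs_nonneg _).trans (hg i ℓ)
  have hh_le : √(L / N) ≤ √L :=
    Real.sqrt_le_sqrt (div_le_self hL.le (Nat.one_le_cast.mpr (NeZero.one_le)))
  rw [Real.rpow_neg hh.le, ← Real.sqrt_eq_rpow, ← Real.sqrt_eq_rpow]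
  calc |f i ℓ| ≤ L ^ 2 * M * √m / lam := hbound
    _ ≤ L ^ 2 * M * √m / lam * (√L / √(L / N)) :=
        le_mul_of_one_le_right (by positivity) ((one_le_div (by positivity)).mpr hh_le)
    _ = _ := by field_simp
end
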